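/- Let n be an even positive integer and let W ⊆ {(i,j) ∈ ℤ² : 0 ≤ i+j ≤ 2n−1} be a finite set with σW = W and |i−j| ≤ n/2 for all (i,j) ∈ W. Then the set S = {(i,j) ∈ W : j − i = n/2 and i+j > n} is a minimal subset of W and S is good. -/

import Mathlib

/-- The partial order on `ℤ²`: `(i,j) ≼ (i′,j′)` iff there exist `l, m ∈ ℕ` with
`i′ = i + l − m` and `j′ = j − m`. -/
def Prec (p q : ℤ × ℤ) : Prop :=
  ∃ l m : ℕ, q.1 = p.1 + (l : ℤ) - (m : ℤ) ∧ q.2 = p.2 - (m : ℤ)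

/-- `σ(i,j) = (j,i)`.  A set `S ⊆ ℤ²` is *good* (for `n`) if
`(⋃_{a=0}^{n} (σS − (a,0))) ∩ S = ∅`. -/
def Good (n : ℕ) (S : Set (ℤ × ℤ)) : Prop :=
  ∀ a : ℕ, a ≤ n → ∀ p ∈ S, ((p.2 - (a : ℤ), p.1) : ℤ × ℤ) ∉ S

/-!
Going down in `≼` can only lower `j − i`, and keeps `i + j` from increasing while `j − i` is
unchanged. So on a set of width `j − i ≤ d`, the points of the top diagonal `j − i = d` lying
above a threshold `c` form a minimal subset. For goodness, `(j − a, i)` stays on the diagonal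
`j − i = d` only when `a = 2d`, and then `i + j` drops by `2d`, below the threshold as soon as
`i + j ≤ c + 2d`.
-/

def IsMinimalSubset (W S : Set (ℤ × ℤ)) : Prop :=
  ∀ s ∈ S, ∀ w ∈ W, w ∉ S → ¬ Prec w s

namespace Prec

variable {w s : ℤ × ℤ}

theorem sub_le_sub (h : Prec w s) : s.2 - s.1 ≤ w.2 - w.1 := by
  obtain ⟨l, m, h1, h2⟩ := h
  omega

theorem add_le_add_of_sub_eq (h : Prec w s) (hdiag : w.2 - w.1 = s.2 - s.1) :
    s.1 + s.2 ≤ w.1 + w.2 := by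
  obtain ⟨l, m, h1, h2⟩ := h
  omega

end Prec

theorem isMinimalSubset_top_diagonal {W : Set (ℤ × ℤ)} {c d : ℤ}
    (hwidth : ∀ p ∈ W, p.2 - p.1 ≤ d) :
    IsMinimalSubset W {p ∈ W | p.2 - p.1 = d ∧ c < p.1 + p.2} := by
  rintro s ⟨-, hsd, hsc⟩ w hwW hwS hws
  have hwd : w.2 - w.1 = s.2 - s.1 := le_antisymm ((hwidth w hwW).trans hsd.ge) hws.sub_le_sub
  exact hwS ⟨hwW, by omega, by linarith [hws.add_le_add_of_sub_eq hwd]⟩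

theorem good_of_subset_diagonal {S : Set (ℤ × ℤ)} {c d : ℤ}
    (hS : ∀ p ∈ S, p.2 - p.1 = d ∧ c < p.1 + p.2 ∧ p.1 + p.2 ≤ c + 2 * d) (n : ℕ) :
    Good n S := by
  rintro a - p hp hq
  obtain ⟨hpd, -, hpc⟩ := hS p hp
  obtain ⟨hqd, hqc, -⟩ := hS _ hq
  dsimp only at hqd hqc
  omega

theorem stmt_8_general (n : ℕ)
    (W : Set (ℤ × ℤ))
    (hband : ∀ p ∈ W, 0 ≤ p.1 + p.2 ∧ p.1 + p.2 ≤ 2 * (n : ℤ) - 1)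
    (hwidth : ∀ p ∈ W, |p.1 - p.2| ≤ (n : ℤ) / 2) :
    (∀ s ∈ {p ∈ W | p.2 - p.1 = (n : ℤ) / 2 ∧ (n : ℤ) < p.1 + p.2},
      ∀ w ∈ W, w ∉ {p ∈ W | p.2 - p.1 = (n : ℤ) / 2 ∧ (n : ℤ) < p.1 + p.2} → ¬ Prec w s) ∧
    Good n {p ∈ W | p.2 - p.1 = (n : ℤ) / 2 ∧ (n : ℤ) < p.1 + p.2} := by
  refine ⟨isMinimalSubset_top_diagonal (c := n) (d := n / 2) fun p hp => ?_,
    good_of_subset_diagonal (c := n) (d := n / 2) ?_ n⟩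
  · have := neg_abs_le (p.1 - p.2)
    linarith [hwidth p hp]
  · rintro p ⟨hpW, hpd, hpc⟩
    -- `2n − 1 ≤ n + 2 (n / 2)` holds for every `n`, even or odd
    have := (hband p hpW).2
    exact ⟨hpd, hpc, by omega⟩

/-- Let `n` be an even positive integer and `W ⊆ {0 ≤ i+j ≤ 2n−1}` a finite
σ-symmetric set with `|i−j| ≤ n/2` on `W`.  Then
`S = {(i,j) ∈ W : j−i = n/2, i+j > n}` is a minimal subset of `W` and is good. -/
theorem stmt_8 (n : ℕ) (hn : 0 < n) (hev : Even n)
    (W : Set (ℤ × ℤ)) (hfin : W.Finite)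
    (hband : ∀ p ∈ W, 0 ≤ p.1 + p.2 ∧ p.1 + p.2 ≤ 2 * (n : ℤ) - 1)
    (hσ : ∀ p : ℤ × ℤ, p ∈ W ↔ ((p.2, p.1) : ℤ × ℤ) ∈ W)
    (hwidth : ∀ p ∈ W, |p.1 - p.2| ≤ (n : ℤ) / 2) :
    (∀ s ∈ {p ∈ W | p.2 - p.1 = (n : ℤ) / 2 ∧ (n : ℤ) < p.1 + p.2},
      ∀ w ∈ W, w ∉ {p ∈ W | p.2 - p.1 = (n : ℤ) / 2 ∧ (n : ℤ) < p.1 + p.2} → ¬ Prec w s) ∧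
    Good n {p ∈ W | p.2 - p.1 = (n : ℤ) / 2 ∧ (n : ℤ) < p.1 + p.2} :=
  stmt_8_general n W hband hwidth
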